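/- arXiv:1502.02538 — 7 statements merged into one kernel-verified Lean document; each statement's English description precedes it below -/
import Mathlib

section
/- Every vertex of an observation has only finitely many incoming edges. -/
/-- An observation: a DAG on vertices (location, positive index, action). -/
structure Observation (P E : Type*) where
  V : Set (P × ℕ × E)
  Z : Set ((P × ℕ × E) × (P × ℕ × E))
  edge_mem : ∀ p ∈ Z, p.1 ∈ V ∧ p.2 ∈ V
  pos_index : ∀ v ∈ V, 0 < v.2.1
  unique_index : ∀ v ∈ V, ∀ w ∈ V, v.1 = w.1 → v.2.1 = w.2.1 → v = w
  downward : ∀ v ∈ V, ∀ k : ℕ, 0 < k → k < v.2.1 → ∃ e : E, (v.1, k, e) ∈ V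
  consec : ∀ v ∈ V, ∀ w ∈ V, w.1 = v.1 → w.2.1 = v.2.1 + 1 → (v, w) ∈ Z
  live_edge : ∀ i j : P, i ≠ j → {w ∈ V | w.1 = j}.Infinite →
      ∀ v ∈ V, v.1 = i → ∃ w ∈ V, w.1 = j ∧ (v, w) ∈ Z
  trans : ∀ u v w, (u, v) ∈ Z → (v, w) ∈ Z → (u, w) ∈ Z
  irrefl : ∀ v, (v, v) ∉ Z

/-- A location is live in an observation iff infinitely many vertices have that location. -/
def Observation.live {P E : Type*} (G : Observation P E) (i : P) : Prop :=
  {v ∈ G.V | v.1 = i}.Infinite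

/-- Same-location vertices with strictly increasing indices are connected. -/
lemma observation_chain {P E : Type*} (G : Observation P E) :
    ∀ n : ℕ, ∀ v ∈ G.V, ∀ w ∈ G.V, w.1 = v.1 → w.2.1 = v.2.1 + n + 1 → (v, w) ∈ G.Z := by
  intro n
  induction n with
  | zero => intro v hv w hw h1 h2; exact G.consec v hv w hw h1 h2
  | succ n ih =>
      intro v hv w hw h1 h2
      obtain ⟨e, he⟩ := G.downward w hw (v.2.1 + n + 1)
        (by have := G.pos_index v hv; omega) (by omega)
      have hu : (v, (w.1, v.2.1 + n + 1, e)) ∈ G.Z := ih v hv _ he h1 rfl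
      have huw : ((w.1, v.2.1 + n + 1, e), w) ∈ G.Z :=
        G.consec _ he w hw rfl (by simp; omega)
      exact G.trans _ _ _ hu huw

/-- Every vertex of an observation has only finitely many incoming edges. -/
theorem observation_finite_incoming_edges {P E : Type*} [Finite P]
    (G : Observation P E) :
    ∀ v ∈ G.V, {u | (u, v) ∈ G.Z}.Finite := by
  intro v hv
  by_contra hinf
  replace hinf : {u | (u, v) ∈ G.Z}.Infinite := hinf
  -- find a location j with infinitely many predecessors
  have hdecomp : {u | (u, v) ∈ G.Z} = ⋃ j : P, {u | (u, v) ∈ G.Z ∧ u.1 = j} := by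
    ext u; simp [Set.mem_iUnion]
  have : ∃ j : P, {u | (u, v) ∈ G.Z ∧ u.1 = j}.Infinite := by
    by_contra h
    push_neg at h
    exact hinf (hdecomp ▸ Set.finite_iUnion h)
  obtain ⟨j, hj⟩ := this
  set S := {u | (u, v) ∈ G.Z ∧ u.1 = j} with hS
  have hSV : ∀ u ∈ S, u ∈ G.V := fun u hu => (G.edge_mem _ hu.1).1
  -- indices in S are injective, so unbounded
  have hinj : Set.InjOn (fun u : P × ℕ × E => u.2.1) S := by
    intro a ha b hb hab
    exact G.unique_index a (hSV a ha) b (hSV b hb) (ha.2.trans hb.2.symm) hab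
  have himg : ((fun u : P × ℕ × E => u.2.1) '' S).Infinite := hj.image hinj
  have hbig : ∀ N : ℕ, ∃ u ∈ S, N < u.2.1 := by
    intro N
    obtain ⟨m, hm, hlt⟩ := himg.exists_gt N
    obtain ⟨u, hu, rfl⟩ := hm
    exact ⟨u, hu, hlt⟩
  by_cases hjv : j = v.1
  · -- predecessors at v's own location with larger index: cycle
    obtain ⟨u, hu, hlt⟩ := hbig v.2.1
    have hvu : (v, u) ∈ G.Z := by
      have := observation_chain G (u.2.1 - v.2.1 - 1) v hv u (hSV u hu)
        (hu.2.trans hjv) (by omega)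
      exact this
    exact G.irrefl v (G.trans v u v hvu hu.1)
  · -- j is live, so v has an edge to some w at location j
    have hlive : {w ∈ G.V | w.1 = j}.Infinite := by
      apply Set.Infinite.mono _ hj
      intro u hu; exact ⟨hSV u hu, hu.2⟩
    obtain ⟨w, hwV, hwj, hvw⟩ := G.live_edge v.1 j (fun h => hjv h.symm) hlive v hv rfl
    obtain ⟨u, hu, hlt⟩ := hbig w.2.1
    have hwu : (w, u) ∈ G.Z :=
      observation_chain G (u.2.1 - w.2.1 - 1) w hwV u (hSV u hu)
        (hu.2.trans hwj.symm) (by omega)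
    have hwv : (w, v) ∈ G.Z := G.trans w u v hwu hu.1
    exact G.irrefl v (G.trans v w v hvw hwv)
end

section
/- Let G be an observation, let j be a location live in G and i ≠ j a location. Then for every vertex v with location i, there exists a positive integer k such that for every k' ≥ k, G contains an edge from v to the vertex (j,k',·). -/
/-- If `j` is live, vertices at `j` have unbounded indices, so every positive
index below some vertex is realized. -/
lemma observation_exists_at_index {P E : Type*} (G : Observation P E) {j : P}
    (hj : G.live j) (n : ℕ) (hn : 0 < n) : ∃ e : E, (j, n, e) ∈ G.V := by
  have hinj : Set.InjOn (fun w : P × ℕ × E => w.2.1) {v ∈ G.V | v.1 = j} := by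
    intro a ha b hb hab
    exact G.unique_index a ha.1 b hb.1 (ha.2.trans hb.2.symm) hab
  have himg : (Set.image (fun w : P × ℕ × E => w.2.1) {v ∈ G.V | v.1 = j}).Infinite :=
    hj.image hinj
  obtain ⟨m, hm, hmn⟩ := himg.exists_gt n
  obtain ⟨u, hu, hum⟩ := hm
  simp only at hum
  rcases lt_or_eq_of_le (Nat.le_of_lt (hum ▸ hmn)) with h | h
  · obtain ⟨e, he⟩ := G.downward u hu.1 n hn (by omega)
    exact ⟨e, hu.2 ▸ he⟩
  · exact ⟨u.2.2, by
      have : u = (j, n, u.2.2) := by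
        obtain ⟨u1, u2, u3⟩ := u
        simp_all
      exact this ▸ hu.1⟩

/-- If `j` is live in `G` and `i ≠ j`, then every vertex `v` with location `i`
has, for some positive `k`, an edge to the vertex `(j, k', ·)` for every `k' ≥ k`. -/
theorem observation_edges_to_live_vertices {P E : Type*}
    (G : Observation P E) {i j : P} (hij : i ≠ j) (hj : G.live j)
    (v : P × ℕ × E) (hv : v ∈ G.V) (hvi : v.1 = i) :
    ∃ k : ℕ, 0 < k ∧ ∀ k' ≥ k, ∃ e : E, (j, k', e) ∈ G.V ∧ (v, (j, k', e)) ∈ G.Z := by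
  obtain ⟨w, hw, hwj, hvw⟩ := G.live_edge i j hij hj v hv hvi
  refine ⟨w.2.1, G.pos_index w hw, ?_⟩
  have key : ∀ m : ℕ, ∃ e : E, (j, w.2.1 + m, e) ∈ G.V ∧ (v, (j, w.2.1 + m, e)) ∈ G.Z := by
    intro m
    induction m with
    | zero =>
      have hweq : w = (j, w.2.1 + 0, w.2.2) := by
        obtain ⟨w1, w2, w3⟩ := w
        simp_all
      exact ⟨w.2.2, hweq ▸ hw, hweq ▸ hvw⟩
    | succ m ih =>
      obtain ⟨e, he, hze⟩ := ih
      obtain ⟨e', he'⟩ := observation_exists_at_index G hj (w.2.1 + m + 1)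
        (by have := G.pos_index w hw; omega)
      refine ⟨e', he', G.trans v (j, w.2.1 + m, e) (j, w.2.1 + (m + 1), e') hze ?_⟩
      exact G.consec (j, w.2.1 + m, e) he (j, w.2.1 + (m + 1), e') he' rfl rfl
  intro k' hk'
  have : k' = w.2.1 + (k' - w.2.1) := by omega
  rw [this]
  exact key _
end

section
/- Let G be an observation, let j be live in G, and let i be a location not live in G (i.e., G has only finitely many vertices with location i). Then there exists a positive integer k such that for every k' ≥ k, there is no edge from the vertex (j,k',·) to any vertex with location i. -/
/-!
The vertices of one location form a chain `(p, 1) → (p, 2) → ⋯` in `G`, so by acyclicity no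
edge goes backwards along it. Each vertex `u` at the crashed location `i` has an edge to some
vertex `w` at the live location `j`; a vertex at `j` of index at least that of `w` cannot have
an edge to `u`, since composing it with `u → w` would be a backward edge. Finitely many `u`
give finitely many bounds, and their maximum is the required `k`.
-/

open Filter

namespace Observation

variable {P E : Type*} (G : Observation P E)

theorem mem_Z_of_index_lt {v w : P × ℕ × E} (hv : v ∈ G.V) (hw : w ∈ G.V) (hvw : w.1 = v.1)
    (hlt : v.2.1 < w.2.1) : (v, w) ∈ G.Z := by
  obtain ⟨n, hn⟩ := Nat.exists_eq_add_of_lt hlt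
  induction n generalizing w with
  | zero => exact G.consec v hv w hw hvw hn
  | succ n ih =>
    obtain ⟨e, hu⟩ := G.downward w hw (v.2.1 + n + 1) (by omega) (by omega)
    exact G.trans _ _ _ (ih hu hvw (by dsimp only; omega) rfl)
      (G.consec _ hu w hw rfl (by dsimp only; omega))

theorem notMem_Z_of_index_le {v w : P × ℕ × E} (hv : v ∈ G.V) (hw : w ∈ G.V) (hvw : w.1 = v.1)
    (hle : w.2.1 ≤ v.2.1) : (v, w) ∉ G.Z := by
  rcases hle.eq_or_lt with heq | hlt
  · rw [G.unique_index w hw v hv hvw heq]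
    exact G.irrefl v
  · exact fun hz => G.irrefl w (G.trans _ _ _ (G.mem_Z_of_index_lt hw hv hvw.symm hlt) hz)

theorem eventually_notMem_Z_of_live {j : P} (hj : G.live j) {u : P × ℕ × E} (hu : u ∈ G.V)
    (huj : u.1 ≠ j) : ∀ᶠ k in atTop, ∀ e : E, (j, k, e) ∈ G.V → ((j, k, e), u) ∉ G.Z := by
  obtain ⟨w, hw, hwj, huw⟩ := G.live_edge u.1 j huj hj u hu rfl
  exact eventually_atTop.2 ⟨w.2.1, fun k hk e hv hvu =>
    G.notMem_Z_of_index_le hv hw hwj hk (G.trans _ _ _ hvu huw)⟩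

end Observation

/-- If `j` is live in `G` and `i ≠ j` is not live in `G`, then there is a
positive integer `k` such that for all `k' ≥ k` there is no edge from the vertex
`(j, k', ·)` to any vertex with location `i`. -/
theorem observation_no_edges_to_crashed_location {P E : Type*}
    (G : Observation P E) {i j : P} (hij : i ≠ j)
    (hj : G.live j) (hi : ¬ G.live i) :
    ∃ k : ℕ, 0 < k ∧ ∀ k' ≥ k, ∀ e : E, (j, k', e) ∈ G.V →
      ∀ u ∈ G.V, u.1 = i → ((j, k', e), u) ∉ G.Z := by
  have hcrashed : ∀ᶠ k in atTop, ∀ u ∈ {v ∈ G.V | v.1 = i}, ∀ e : E, (j, k, e) ∈ G.V →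
      ((j, k, e), u) ∉ G.Z :=
    (eventually_all_finite (Set.not_infinite.mp hi)).2 fun u ⟨hu, hui⟩ =>
      G.eventually_notMem_Z_of_live hj hu (hui ▸ hij)
  obtain ⟨k, hk⟩ := eventually_atTop.1 (hcrashed.and (eventually_gt_atTop 0))
  exact ⟨k, (hk k le_rfl).2, fun k' hk' e he u hu hui => (hk k' hk').1 u ⟨hu, hui⟩ e he⟩
end

section
/- Let G and G' be two finite observations such that (a) there do not exist vertices (i,k,e) ∈ V(G) and (i,k,e') ∈ V(G') with e ≠ e', and (b) any vertex belonging to both G and G' has the same set of incoming edges in G and in G'. Then the union graph G ∪ G' (vertex-wise and edge-wise union) is also an observation. -/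
/-- The union of two finite observations that agree on common (location,index)
vertices and on incoming edges of common vertices is again an observation. -/
theorem union_of_finite_observations {P E : Type*}
    (G G' : Observation P E)
    (hGfin : G.V.Finite) (hG'fin : G'.V.Finite)
    (h1 : ∀ (i : P) (k : ℕ) (e e' : E), (i, k, e) ∈ G.V → (i, k, e') ∈ G'.V → e = e')
    (h2 : ∀ v ∈ G.V ∩ G'.V, {u | (u, v) ∈ G.Z} = {u | (u, v) ∈ G'.Z}) :
    ∃ H : Observation P E, H.V = G.V ∪ G'.V ∧ H.Z = G.Z ∪ G'.Z := by
  -- cross uniqueness: a G-vertex and a G'-vertex with same location and index are equal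
  have cross : ∀ v ∈ G.V, ∀ w ∈ G'.V, v.1 = w.1 → v.2.1 = w.2.1 → v = w := by
    rintro ⟨i, k, e⟩ hv ⟨i', k', e'⟩ hw h₁ h₂
    simp only at h₁ h₂
    subst h₁; subst h₂
    have := h1 i k e e' hv hw
    subst this; rfl
  refine ⟨⟨G.V ∪ G'.V, G.Z ∪ G'.Z, ?_, ?_, ?_, ?_, ?_, ?_, ?_, ?_⟩, rfl, rfl⟩
  · rintro p (hp | hp)
    · exact ⟨Or.inl (G.edge_mem p hp).1, Or.inl (G.edge_mem p hp).2⟩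
    · exact ⟨Or.inr (G'.edge_mem p hp).1, Or.inr (G'.edge_mem p hp).2⟩
  · rintro v (hv | hv)
    exacts [G.pos_index v hv, G'.pos_index v hv]
  · rintro v (hv | hv) w (hw | hw) h₁ h₂
    · exact G.unique_index v hv w hw h₁ h₂
    · exact cross v hv w hw h₁ h₂
    · exact (cross w hw v hv h₁.symm h₂.symm).symm
    · exact G'.unique_index v hv w hw h₁ h₂
  · rintro v (hv | hv) k hk hk'
    · obtain ⟨e, he⟩ := G.downward v hv k hk hk'; exact ⟨e, Or.inl he⟩
    · obtain ⟨e, he⟩ := G'.downward v hv k hk hk'; exact ⟨e, Or.inr he⟩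
  · rintro v (hv | hv) w (hw | hw) h₁ h₂
    · exact Or.inl (G.consec v hv w hw h₁ h₂)
    · -- v ∈ G.V, w ∈ G'.V : v is also in G'.V by downward closure of G'
      have hpos : 0 < v.2.1 := G.pos_index v hv
      obtain ⟨e, he⟩ := G'.downward w hw v.2.1 hpos (by omega)
      have hv' : v ∈ G'.V := by
        rw [cross v hv _ he h₁.symm rfl]; exact he
      exact Or.inr (G'.consec v hv' w hw h₁ h₂)
    · have hpos : 0 < v.2.1 := G'.pos_index v hv
      obtain ⟨e, he⟩ := G.downward w hw v.2.1 hpos (by omega)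
      have hv' : v ∈ G.V := by
        rw [← cross _ he v hv h₁ rfl]; exact he
      exact Or.inl (G.consec v hv' w hw h₁ h₂)
    · exact Or.inr (G'.consec v hv w hw h₁ h₂)
  · intro i j _ hinf
    exfalso
    exact hinf (((hGfin.union hG'fin).subset (fun x hx => hx.1)))
  · rintro u v w (huv | huv) (hvw | hvw)
    · exact Or.inl (G.trans u v w huv hvw)
    · have hv : v ∈ G.V ∩ G'.V := ⟨(G.edge_mem _ huv).2, (G'.edge_mem _ hvw).1⟩
      have : (u, v) ∈ G'.Z := by
        have := h2 v hv
        exact (Set.ext_iff.1 this u).1 huv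
      exact Or.inr (G'.trans u v w this hvw)
    · have hv : v ∈ G.V ∩ G'.V := ⟨(G.edge_mem _ hvw).1, (G'.edge_mem _ huv).2⟩
      have : (u, v) ∈ G.Z := by
        have := h2 v hv
        exact (Set.ext_iff.1 this u).2 huv
      exact Or.inl (G.trans u v w this hvw)
    · exact Or.inr (G'.trans u v w huv hvw)
  · rintro v (hv | hv)
    exacts [G.irrefl v hv, G'.irrefl v hv]
end

section
/- Let G∞ be the limit (vertex-wise and edge-wise union) of an infinite sequence G_1, G_2, … of finite observations, where each G_y is a prefix of G_{y+1}. Suppose that for every vertex v of G∞ and every location j live in G∞, there exists a vertex v' of G∞ with location j such that G∞ contains the edge (v,v'). Then G∞ is an observation. -/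
/-- Graph-level prefix: `(V1, Z1)` is a prefix of `(V2, Z2)` iff it is a subgraph and
every vertex of `V1` has the same incoming edges in both graphs. -/
def IsGraphPrefix {α : Type*} (V1 : Set α) (Z1 : Set (α × α))
    (V2 : Set α) (Z2 : Set (α × α)) : Prop :=
  V1 ⊆ V2 ∧ Z1 ⊆ Z2 ∧ ∀ v ∈ V1, ∀ u, (u, v) ∈ Z2 → (u, v) ∈ Z1

/-- `G'` is a prefix of `G` (as observations). -/
def Observation.IsPrefix {P E : Type*} (G' G : Observation P E) : Prop :=
  IsGraphPrefix G'.V G'.Z G.V G.Z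

/-- The limit of a prefix-increasing sequence of finite observations is an
observation, provided every vertex of the limit has an edge to some vertex at each live
location of the limit. -/
theorem limit_of_observations_is_observation {P E : Type*}
    (Gs : ℕ → Observation P E)
    (hfin : ∀ y : ℕ, (Gs y).V.Finite)
    (hpre : ∀ y : ℕ, (Gs y).IsPrefix (Gs (y + 1)))
    (hlive : ∀ v ∈ Set.iUnion (fun y => (Gs y).V), ∀ j : P,
        {w ∈ Set.iUnion (fun y => (Gs y).V) | w.1 = j}.Infinite →
        ∃ w ∈ Set.iUnion (fun y => (Gs y).V), w.1 = j ∧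
          (v, w) ∈ Set.iUnion (fun y => (Gs y).Z)) :
    ∃ H : Observation P E,
      H.V = Set.iUnion (fun y => (Gs y).V) ∧
      H.Z = Set.iUnion (fun y => (Gs y).Z) := by

  classical
  set VU := Set.iUnion (fun y => (Gs y).V) with hVU
  set ZU := Set.iUnion (fun y => (Gs y).Z) with hZU
  have hVmono : ∀ a b : ℕ, a ≤ b → (Gs a).V ⊆ (Gs b).V := by
    intro a b hab
    induction b with
    | zero => simpa [Nat.le_zero.mp hab]
    | succ n ih =>
      rcases Nat.lt_or_ge a (n+1) with h | h
      · exact Set.Subset.trans (ih (Nat.lt_succ_iff.mp h)) (hpre n).1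
      · have : a = n + 1 := le_antisymm hab h
        simp [this]
  have hZmono : ∀ a b : ℕ, a ≤ b → (Gs a).Z ⊆ (Gs b).Z := by
    intro a b hab
    induction b with
    | zero => simpa [Nat.le_zero.mp hab]
    | succ n ih =>
      rcases Nat.lt_or_ge a (n+1) with h | h
      · exact Set.Subset.trans (ih (Nat.lt_succ_iff.mp h)) (hpre n).2.1
      · have : a = n + 1 := le_antisymm hab h
        simp [this]
  refine ⟨⟨VU, ZU, ?_, ?_, ?_, ?_, ?_, ?_, ?_, ?_⟩, rfl, rfl⟩
  · rintro p hp
    rcases Set.mem_iUnion.mp hp with ⟨y, hy⟩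
    have h := (Gs y).edge_mem p hy
    exact ⟨Set.mem_iUnion.mpr ⟨y, h.1⟩, Set.mem_iUnion.mpr ⟨y, h.2⟩⟩
  · rintro v hv
    rcases Set.mem_iUnion.mp hv with ⟨y, hy⟩
    exact (Gs y).pos_index v hy
  · rintro v hv w hw h1 h2
    rcases Set.mem_iUnion.mp hv with ⟨a, ha⟩
    rcases Set.mem_iUnion.mp hw with ⟨b, hb⟩
    exact (Gs (max a b)).unique_index v (hVmono a _ (le_max_left a b) ha)
      w (hVmono b _ (le_max_right a b) hb) h1 h2
  · rintro v hv k hk1 hk2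
    rcases Set.mem_iUnion.mp hv with ⟨y, hy⟩
    rcases (Gs y).downward v hy k hk1 hk2 with ⟨e, he⟩
    exact ⟨e, Set.mem_iUnion.mpr ⟨y, he⟩⟩
  · rintro v hv w hw h1 h2
    rcases Set.mem_iUnion.mp hv with ⟨a, ha⟩
    rcases Set.mem_iUnion.mp hw with ⟨b, hb⟩
    exact Set.mem_iUnion.mpr ⟨max a b, (Gs (max a b)).consec v (hVmono a _ (le_max_left a b) ha)
      w (hVmono b _ (le_max_right a b) hb) h1 h2⟩
  · rintro i j _ hinf v hv _
    exact hlive v hv j hinf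
  · rintro u v w h1 h2
    rcases Set.mem_iUnion.mp h1 with ⟨a, ha⟩
    rcases Set.mem_iUnion.mp h2 with ⟨b, hb⟩
    exact Set.mem_iUnion.mpr ⟨max a b, (Gs (max a b)).trans u v w
      (hZmono a _ (le_max_left a b) ha) (hZmono b _ (le_max_right a b) hb)⟩
  · rintro v hv
    rcases Set.mem_iUnion.mp hv with ⟨y, hy⟩
    exact (Gs y).irrefl v hy
end

section
/- The valid sequences over the alphabet of Ω-outputs and crash events that form the trace set T_Ω of the leader election AFD Ω satisfy closure under strong sampling: for every t ∈ T_Ω, every subsequence t' of t that is itself a valid sequence is also in T_Ω. -/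
/-- A (finite or infinite) sequence of actions, modeled as `ℕ → Option A` whose support
is an initial segment. -/
structure Trace (A : Type*) where
  f : ℕ → Option A
  stable : ∀ n : ℕ, f n = none → f (n + 1) = none

/-- `t'` is a subsequence of `t`. -/
def IsSubseq {A : Type*} (t' t : Trace A) : Prop :=
  ∃ g : ℕ → ℕ, StrictMono g ∧ ∀ n a, t'.f n = some a → t.f (g n) = some a

/-- Actions of the leader-election oracle Ω: crashes and outputs `FD-Ω(j)_i`
("leader is `j`", output at location `i`). -/
inductive OmegaAct (P : Type*) where
  | crash (i : P)
  | out (i j : P)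

/-- Location `i` crashes in trace `t`. -/
def OmegaCrashes {P : Type*} (t : Trace (OmegaAct P)) (i : P) : Prop :=
  ∃ n, t.f n = some (OmegaAct.crash i)

/-- A valid Ω-sequence: no output at `i` follows `crash_i`, and every uncrashed location
has infinitely many outputs. -/
def OmegaValid {P : Type*} (t : Trace (OmegaAct P)) : Prop :=
  (∀ (i : P) (n m : ℕ) (j : P),
      t.f n = some (OmegaAct.crash i) → n < m → t.f m ≠ some (OmegaAct.out i j)) ∧
  (∀ i : P, ¬ OmegaCrashes t i → {n | ∃ j, t.f n = some (OmegaAct.out i j)}.Infinite)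

/-- The trace set `T_Ω` of the AFD Ω: valid sequences such that, if some location is
live, there are a live location `l` and a suffix in which all outputs are `FD-Ω(l)_i`
with `i` live. -/
def TOmega {P : Type*} (t : Trace (OmegaAct P)) : Prop :=
  OmegaValid t ∧
  ((∃ i : P, ¬ OmegaCrashes t i) →
    ∃ l : P, ¬ OmegaCrashes t l ∧ ∃ N : ℕ, ∀ n ≥ N, ∀ i j : P,
      t.f n = some (OmegaAct.out i j) → j = l ∧ ¬ OmegaCrashes t i)

/-- `T_Ω` is closed under strong sampling: every valid subsequence of a
trace in `T_Ω` is again in `T_Ω`. -/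
theorem omega_closed_under_strong_sampling {P : Type*}
    (t : Trace (OmegaAct P)) (ht : TOmega t)
    (t' : Trace (OmegaAct P)) (hsub : IsSubseq t' t) (hval : OmegaValid t') :
    TOmega t' := by
  obtain ⟨g, hg, hmap⟩ := hsub
  refine ⟨hval, ?_⟩
  rintro ⟨i, hi⟩
  -- i is uncrashed in t as well
  have hcrash_mono : ∀ k : P, OmegaCrashes t' k → OmegaCrashes t k := by
    rintro k ⟨n, hn⟩; exact ⟨g n, hmap n _ hn⟩
  have hit : ¬ OmegaCrashes t i := by
    rintro ⟨m, hm⟩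
    have hinf := hval.2 i hi
    obtain ⟨n, hn, hmn⟩ := hinf.exists_gt m
    obtain ⟨j, hj⟩ := hn
    exact ht.1.1 i m (g n) j hm (lt_of_lt_of_le hmn (hg.le_apply)) (hmap n _ hj)
  obtain ⟨l, hl, N, hN⟩ := ht.2 ⟨i, hit⟩
  refine ⟨l, fun h => hl (hcrash_mono l h), N, fun n hn i' j hij => ?_⟩
  have := hN (g n) (le_trans hn hg.le_apply) i' j (hmap n _ hij)
  exact ⟨this.1, fun h => this.2 (hcrash_mono i' h)⟩
end

section
/- Let G be an observation and b a fair branch of G (a maximal path containing infinitely many vertices at each live location of G). Let t be a sequence compatible with G (its projection on output events is the event-sequence of some topological ordering of the vertices of G) and let ε be the event sequence of b. Then there exists a subsequence t' of t such that the projection of t' on output events equals ε and t' is a valid sequence (i.e., t' is a strong sampling of t). -/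
/-- Actions of an AFD setting: crash events and output events (an output event `e` has a
location `loc e`). -/
inductive FDAct (P E : Type*) where
  | crash (i : P)
  | out (e : E)

/-- Location `i` crashes in trace `t`. -/
def FDCrashes {P E : Type*} (t : Trace (FDAct P E)) (i : P) : Prop :=
  ∃ n, t.f n = some (FDAct.crash i)

/-- A valid sequence: no output at location `i` follows a `crash_i` event, and every
uncrashed location has infinitely many output events. -/
def FDValid {P E : Type*} (loc : E → P) (t : Trace (FDAct P E)) : Prop :=
  (∀ (i : P) (n m : ℕ) (e : E),
      t.f n = some (FDAct.crash i) → n < m → t.f m = some (FDAct.out e) → loc e ≠ i) ∧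
  (∀ i : P, ¬ FDCrashes t i →
      {n | ∃ e, loc e = i ∧ t.f n = some (FDAct.out e)}.Infinite)

/-- `t` is compatible with observation `G`: the projection of `t` on output events is the
event-sequence of some topological ordering `σ` of the vertices of `G`. -/
def Compatible {P E : Type*} (loc : E → P) (t : Trace (FDAct P E))
    (G : Observation P E) : Prop :=
  ∃ (σ : Trace (P × ℕ × E)) (g : ℕ → ℕ),
    StrictMono g ∧
    (∀ n v, σ.f n = some v → v ∈ G.V) ∧
    (∀ v ∈ G.V, ∃! n, σ.f n = some v) ∧
    (∀ m n u v, σ.f m = some u → σ.f n = some v → (u, v) ∈ G.Z → m < n) ∧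
    (∀ n v, σ.f n = some v → t.f (g n) = some (FDAct.out v.2.2)) ∧
    (∀ m e, t.f m = some (FDAct.out e) →
      ∃ n v, σ.f n = some v ∧ v.2.2 = e ∧ g n = m)

/-- `b` is a fair branch of `G`: a maximal path of `G` containing infinitely many
vertices at each live location of `G`. -/
def IsFairBranch {P E : Type*} (G : Observation P E)
    (b : Trace (P × ℕ × E)) : Prop :=
  (∀ n v, b.f n = some v → v ∈ G.V) ∧
  (∀ n u v, b.f n = some u → b.f (n + 1) = some v → (u, v) ∈ G.Z) ∧
  (∀ n u, b.f n = some u → b.f (n + 1) = none → ∀ w ∈ G.V, (u, w) ∉ G.Z) ∧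
  (∀ u, b.f 0 = some u → ∀ w ∈ G.V, (w, u) ∉ G.Z) ∧
  (∀ i : P, G.live i → {n | ∃ v, b.f n = some v ∧ v.1 = i}.Infinite)

/-- The projection of `t'` on output events equals the event-sequence of the vertex
sequence `b`. -/
def OutProjEq {P E : Type*} (t' : Trace (FDAct P E))
    (b : Trace (P × ℕ × E)) : Prop :=
  ∃ g : ℕ → ℕ, StrictMono g ∧
    (∀ n v, b.f n = some v → t'.f (g n) = some (FDAct.out v.2.2)) ∧
    (∀ m e, t'.f m = some (FDAct.out e) →
      ∃ n v, b.f n = some v ∧ v.2.2 = e ∧ g n = m)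

/-!
Keep from `t` exactly the outputs of the vertices of `b` and all crash events. Since `t` lists
the vertices of `G` in a topological order, the outputs of `b` appear in `t` in the order of `b`.
Crash-safety passes to every subsequence. A location that does not crash in the sample does not
crash in `t`, so it has infinitely many outputs in `t`, is therefore live in `G`, and is visited
infinitely often by the fair branch `b`.
-/

open Nat

theorem exists_strictMono_eq_of_lt_succ {p : ℕ → Prop} (hp : ∀ n, p (n + 1) → p n)
    {f : ℕ → ℕ} (hf : ∀ n, p (n + 1) → f n < f (n + 1)) :
    ∃ g : ℕ → ℕ, StrictMono g ∧ ∀ n, p n → g n = f n := by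
  classical
  -- off the initial segment `p`, the term `n + ∑ k < n, f k` dominates every earlier value
  refine ⟨fun n => if p n then f n else n + ∑ k ∈ Finset.range n, f k,
    strictMono_nat_of_lt_succ fun n => ?_, fun n hn => if_pos hn⟩
  have hle : f n ≤ ∑ k ∈ Finset.range (n + 1), f k :=
    Finset.single_le_sum (fun _ _ => Nat.zero_le _) (Finset.self_mem_range_succ n)
  by_cases hn1 : p (n + 1)
  · simp only [hn1, hp n hn1, if_true, hf n hn1]
  · by_cases hn : p n
    · simp only [hn, hn1, if_true, if_false]
      omega
    · simp only [hn, hn1, if_false, Finset.sum_range_succ]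
      omega

namespace Trace

variable {A : Type*}

open Classical in
/-- The subsequence of `t` formed by the positions satisfying `p`, in increasing order. -/
noncomputable def sample (t : Trace A) (p : ℕ → Prop) (hp : ∀ m, p m → t.f m ≠ none) :
    Trace A where
  f n := if ∀ hf : (Set.ofPred p).Finite, n < hf.toFinset.card then t.f (nth p n) else none
  stable n hn := by
    by_cases h : ∀ hf : (Set.ofPred p).Finite, n + 1 < hf.toFinset.card
    · have h' : ∀ hf : (Set.ofPred p).Finite, n < hf.toFinset.card :=
        fun hf => (Nat.lt_succ_self n).trans (h hf)
      rw [if_pos h'] at hn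
      exact absurd hn (hp _ (nth_mem n h'))
    · simp only [h, if_false]

variable {t : Trace A} {p : ℕ → Prop} {hp : ∀ m, p m → t.f m ≠ none}

theorem sample_f_count [DecidablePred p] {m : ℕ} (hm : p m) :
    (t.sample p hp).f (count p m) = t.f m := by
  obtain ⟨n, hn, rfl⟩ := exists_lt_card_nth_eq hm
  rw [count_nth hn]
  exact if_pos hn

theorem exists_of_sample_f_eq_some [DecidablePred p] {n : ℕ} {a : A}
    (h : (t.sample p hp).f n = some a) :
    ∃ m, p m ∧ count p m = n ∧ t.f m = some a := by
  by_cases hn : ∀ hf : (Set.ofPred p).Finite, n < hf.toFinset.card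
  · have h : t.f (nth p n) = some a := (if_pos hn).symm.trans h
    exact ⟨nth p n, nth_mem n hn, count_nth hn, h⟩
  · cases (if_neg hn).symm.trans h

theorem isSubseq_sample : IsSubseq (t.sample p hp) t := by
  classical
  obtain ⟨g, hg, hg_eq⟩ := exists_strictMono_eq_of_lt_succ
    (p := fun n => ∀ hf : (Set.ofPred p).Finite, n < hf.toFinset.card)
    (fun n h hf => (Nat.lt_succ_self n).trans (h hf))
    (fun n h => nth_lt_nth' (Nat.lt_succ_self n) h)
  refine ⟨g, hg, fun n a h => ?_⟩
  obtain ⟨m, hm, rfl, htm⟩ := exists_of_sample_f_eq_some h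
  obtain ⟨k, hk, rfl⟩ := exists_lt_card_nth_eq hm
  rwa [count_nth hk, hg_eq k hk]

end Trace

section FailureDetector

variable {P E : Type*} {loc : E → P}

def outputPositions (loc : E → P) (t : Trace (FDAct P E)) (i : P) : Set ℕ :=
  {n | ∃ e, loc e = i ∧ t.f n = some (FDAct.out e)}

theorem IsSubseq.fdValid {t' t : Trace (FDAct P E)} (hsub : IsSubseq t' t)
    (hval : FDValid loc t) (hcrash : ∀ i, FDCrashes t i → FDCrashes t' i)
    (hout : ∀ i, (outputPositions loc t i).Infinite → (outputPositions loc t' i).Infinite) :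
    FDValid loc t' := by
  obtain ⟨g, hg, hgt⟩ := hsub
  refine ⟨fun i n m e hn hnm hm => hval.1 i (g n) (g m) e (hgt _ _ hn) (hg hnm) (hgt _ _ hm),
    fun i hi => hout i (hval.2 i (mt (hcrash i) hi))⟩

/-- `τ v` is the position in `t` of the output event of the vertex `v`. -/
structure IsSchedule (G : Observation P E) (t : Trace (FDAct P E)) (τ : P × ℕ × E → ℕ) :
    Prop where
  f_eq_out : ∀ v ∈ G.V, t.f (τ v) = some (FDAct.out v.2.2)
  lt_of_mem_Z : ∀ u v, (u, v) ∈ G.Z → τ u < τ v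
  exists_of_f_eq_out : ∀ m e, t.f m = some (FDAct.out e) → ∃ v ∈ G.V, v.2.2 = e ∧ τ v = m

theorem Compatible.exists_isSchedule {t : Trace (FDAct P E)} {G : Observation P E}
    (h : Compatible loc t G) : ∃ τ, IsSchedule G t τ := by
  classical
  obtain ⟨σ, g, hg, hσV, hσuniq, hσord, hσt, htσ⟩ := h
  let pos : P × ℕ × E → ℕ := fun v => if hv : v ∈ G.V then (hσuniq v hv).choose else 0
  have hpos : ∀ v ∈ G.V, σ.f (pos v) = some v := fun v hv => by
    simpa only [pos, hv, dif_pos] using (hσuniq v hv).choose_spec.1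
  refine ⟨g ∘ pos, ⟨fun v hv => hσt _ v (hpos v hv), fun u v huv => ?_, fun m e hm => ?_⟩⟩
  · obtain ⟨hu, hv⟩ := G.edge_mem _ huv
    exact hg (hσord _ _ u v (hpos u hu) (hpos v hv) huv)
  · obtain ⟨n, v, hn, rfl, rfl⟩ := htσ m e hm
    have hv := hσV n v hn
    exact ⟨v, hv, rfl, congrArg g ((hσuniq v hv).unique (hpos v hv) hn)⟩

variable {G : Observation P E} {t : Trace (FDAct P E)} {τ : P × ℕ × E → ℕ}

theorem IsSchedule.live_of_infinite (hτ : IsSchedule G t τ) (hloc : ∀ v ∈ G.V, loc v.2.2 = v.1)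
    {i : P} (hi : (outputPositions loc t i).Infinite) : G.live i := by
  refine Set.Infinite.of_image τ (hi.mono ?_)
  rintro m ⟨e, rfl, hm⟩
  obtain ⟨v, hv, rfl, rfl⟩ := hτ.exists_of_f_eq_out m e hm
  exact ⟨v, ⟨hv, (hloc v hv).symm⟩, rfl⟩

theorem OutProjEq.infinite_outputPositions {t' : Trace (FDAct P E)} {b : Trace (P × ℕ × E)}
    (h : OutProjEq t' b) (hb : IsFairBranch G b) (hloc : ∀ v ∈ G.V, loc v.2.2 = v.1) {i : P}
    (hi : G.live i) : (outputPositions loc t' i).Infinite := by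
  obtain ⟨g, hg, hgb, -⟩ := h
  obtain ⟨hbV, -, -, -, hfair⟩ := hb
  refine ((hfair i hi).image hg.injective.injOn).mono ?_
  rintro _ ⟨n, ⟨v, hv, rfl⟩, rfl⟩
  exact ⟨v.2.2, hloc v (hbV n v hv), hgb n v hv⟩

def branchPositions (t : Trace (FDAct P E)) (τ : P × ℕ × E → ℕ) (b : Trace (P × ℕ × E)) :
    ℕ → Prop :=
  fun m => (∃ n v, b.f n = some v ∧ τ v = m) ∨ ∃ i, t.f m = some (FDAct.crash i)

variable {b : Trace (P × ℕ × E)}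

theorem IsSchedule.branchPositions_ne_none (hτ : IsSchedule G t τ)
    (hbV : ∀ n v, b.f n = some v → v ∈ G.V) :
    ∀ m, branchPositions t τ b m → t.f m ≠ none := by
  rintro m (⟨n, v, hv, rfl⟩ | ⟨i, hi⟩)
  · simp [hτ.f_eq_out v (hbV n v hv)]
  · simp [hi]

theorem IsSchedule.outProjEq_sample (hτ : IsSchedule G t τ)
    (hbV : ∀ n v, b.f n = some v → v ∈ G.V)
    (hbZ : ∀ n u v, b.f n = some u → b.f (n + 1) = some v → (u, v) ∈ G.Z) :
    OutProjEq (t.sample _ (hτ.branchPositions_ne_none hbV)) b := by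
  classical
  set q := branchPositions t τ b
  have hq : ∀ n v, b.f n = some v → q (τ v) := fun n v hv => Or.inl ⟨n, v, hv, rfl⟩
  obtain ⟨g, hg, hg_eq⟩ := exists_strictMono_eq_of_lt_succ (p := fun n => b.f n ≠ none)
    (f := fun n => (b.f n).elim 0 fun v => count q (τ v)) (fun n => mt (b.stable n))
    (fun n hn => by
      obtain ⟨v, hv⟩ := Option.ne_none_iff_exists'.mp hn
      obtain ⟨u, hu⟩ := Option.ne_none_iff_exists'.mp (mt (b.stable n) (by simp [hv]))
      simpa only [hu, hv, Option.elim] using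
        count_strict_mono (hq n u hu) (hτ.lt_of_mem_Z u v (hbZ n u v hu hv)))
  have hg_count : ∀ n v, b.f n = some v → g n = count q (τ v) := fun n v hv => by
    simp [hg_eq n (by simp [hv]), hv]
  refine ⟨g, hg, fun n v hv => ?_, fun m e hm => ?_⟩
  · rw [hg_count n v hv, Trace.sample_f_count (hq n v hv), hτ.f_eq_out v (hbV n v hv)]
  · obtain ⟨k, ⟨n, v, hv, rfl⟩ | ⟨i, hi⟩, rfl, hk⟩ := Trace.exists_of_sample_f_eq_some hm
    · rw [hτ.f_eq_out v (hbV n v hv)] at hk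
      exact ⟨n, v, hv, by simpa using hk, hg_count n v hv⟩
    · simp [hi] at hk

theorem IsSchedule.crashes_sample (hτ : IsSchedule G t τ)
    (hbV : ∀ n v, b.f n = some v → v ∈ G.V) {i : P} (hi : FDCrashes t i) :
    FDCrashes (t.sample _ (hτ.branchPositions_ne_none hbV)) i := by
  classical
  obtain ⟨m, hm⟩ := hi
  exact ⟨_, (Trace.sample_f_count (Or.inr ⟨i, hm⟩)).trans hm⟩

end FailureDetector

/-- For a valid trace `t` compatible with an observation `G` and a fair
branch `b` of `G` with event sequence `ε`, there is a strong sampling `t'` of `t`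
(a subsequence that is itself valid) whose projection on output events equals `ε`. -/
theorem fair_branch_strong_sampling {P E : Type*}
    (loc : E → P) (G : Observation P E)
    (hloc : ∀ v ∈ G.V, loc v.2.2 = v.1)
    (t : Trace (FDAct P E)) (hval : FDValid loc t) (hcomp : Compatible loc t G)
    (b : Trace (P × ℕ × E)) (hb : IsFairBranch G b) :
    ∃ t' : Trace (FDAct P E),
      IsSubseq t' t ∧ FDValid loc t' ∧ OutProjEq t' b := by
  obtain ⟨τ, hτ⟩ := hcomp.exists_isSchedule
  have hsub := Trace.isSubseq_sample (hp := hτ.branchPositions_ne_none hb.1)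
  have hproj := hτ.outProjEq_sample hb.1 hb.2.1
  refine ⟨_, hsub, hsub.fdValid hval (fun _ => hτ.crashes_sample hb.1) fun i hi => ?_, hproj⟩
  exact hproj.infinite_outputPositions hb hloc (hτ.live_of_infinite hloc hi)
end
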